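/- Let Δ be a 2-local derivation on 𝓑 with Δ(L_{0,0}) = Δ(L_{1,0}) = 0. Then for every β ∈ ℤ and j ∈ ℤ≥0, there exists ξ ∈ ℂ such that Δ(L_{β,j}) = j ξ L_{β,j}. -/

import Mathlib

noncomputable section

abbrev B := (ℤ × ℕ) →₀ ℂ

/-- basis element `L α i` -/
def L (α : ℤ) (i : ℕ) : B := Finsupp.single (α, i) 1

/-- structure constant `(α-1)(j+1) - (β-1)(i+1)` -/
def coef (p q : ℤ × ℕ) : ℂ :=
  ((p.1 - 1) * ((q.2 : ℤ) + 1) - (q.1 - 1) * ((p.2 : ℤ) + 1) : ℤ)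

/-- the Block-type bracket, as a bilinear map -/
def br : B →ₗ[ℂ] B →ₗ[ℂ] B :=
  Finsupp.lsum ℂ fun p => LinearMap.toSpanSingleton ℂ _
    (Finsupp.lsum ℂ fun q => LinearMap.toSpanSingleton ℂ _
      (coef p q • L (p.1 + q.1) (p.2 + q.2)))

/-- the outer derivation `d`, with `d (L β j) = β • L β j` -/
def dmap : B →ₗ[ℂ] B :=
  Finsupp.lsum ℂ fun p => LinearMap.toSpanSingleton ℂ _ ((p.1 : ℂ) • L p.1 p.2)

def IsDer (D : B →ₗ[ℂ] B) : Prop := ∀ x y, D (br x y) = br (D x) y + br x (D y)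

def Is2Local (Δ : B → B) : Prop :=
  ∀ x y, ∃ D : B →ₗ[ℂ] B, IsDer D ∧ Δ x = D x ∧ Δ y = D y

/-! Write each derivation as `ad a + λ d`. The one agreeing with `Δ` at `L 0 0` kills `L 0 0`, and
`[L 1 i, L 0 0] = (i + 1) L 1 i` forces `a (1, i) = 0`; hence `Δ (L β j)` has no component of first
index `β + 1`. The one agreeing with `Δ` at `L 1 0` kills `L 1 0`, which forces
`a = λ L 0 0 + ∑ cᵢ L 1 i`. The terms `L 1 i` only produce components of first index `β + 1`, so they
contribute nothing to `Δ (L β j)`, and `λ (ad (L 0 0) + d)` multiplies `L β j` by `-j λ`. -/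

lemma L_apply_of_ne {β : ℤ} {j : ℕ} {p : ℤ × ℕ} (h : p ≠ (β, j)) : L β j p = 0 :=
  Finsupp.single_eq_of_ne h

lemma dmap_L (β : ℤ) (j : ℕ) : dmap (L β j) = (β : ℂ) • L β j := by
  simp [dmap, L, Finsupp.lsum_apply, Finsupp.sum_single_index]

lemma br_L (a : B) (β : ℤ) (j : ℕ) :
    br a (L β j) = a.sum fun p c => (c * coef p (β, j)) • L (p.1 + β) (p.2 + j) := by
  simp [br, L, Finsupp.lsum_apply, LinearMap.toSpanSingleton_apply, Finsupp.sum_single_index]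

lemma br_L_L (α β : ℤ) (i j : ℕ) :
    br (L α i) (L β j) = coef (α, i) (β, j) • L (α + β) (i + j) := by
  rw [br_L, L, Finsupp.sum_single_index] <;> simp

lemma br_L_apply_add (a : B) (α β : ℤ) (i j : ℕ) :
    br a (L β j) (α + β, i + j) = a (α, i) * coef (α, i) (β, j) := by
  rw [br_L, Finsupp.sum_apply, Finsupp.sum, Finset.sum_eq_single (α, i)]
  · simp [L]
  · rintro p - hp
    rw [Finsupp.smul_apply, L_apply_of_ne, smul_zero]
    contrapose! hp
    simp only [Prod.ext_iff] at hp ⊢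
    omega
  · intro h
    simp [Finsupp.notMem_support_iff.mp h]

lemma br_L_eq_zero {a : B} {β : ℤ} {j : ℕ} (h : ∀ p, a p * coef p (β, j) = 0) :
    br a (L β j) = 0 := by
  rw [br_L]
  exact Finset.sum_eq_zero fun p _ => by simp only [h, zero_smul]

lemma br_L00_apply (a : B) (α : ℤ) (i : ℕ) : br a (L 0 0) (α, i) = a (α, i) * (α + i) := by
  have := br_L_apply_add a α 0 i 0
  simp only [add_zero, coef] at this
  rw [this]; push_cast; ring

lemma br_L10_apply_add_one (a : B) (α : ℤ) (i : ℕ) :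
    br a (L 1 0) (α + 1, i) = a (α, i) * (α - 1) := by
  have := br_L_apply_add a α 1 i 0
  simp only [add_zero, coef] at this
  rw [this]; push_cast; ring

section InnerPlusOuter

variable {D : B →ₗ[ℂ] B} {a : B} {lam : ℂ} (hD : ∀ x, D x = br a x + lam • dmap x)
include hD

lemma apply_L_one_add_eq_zero_of_apply_L00 (h : D (L 0 0) = 0) (β : ℤ) (j i : ℕ) :
    D (L β j) (1 + β, i + j) = 0 := by
  have hbr : br a (L 0 0) = 0 := by simpa [hD, dmap_L] using h
  have ha : a (1, i) * (1 + i) = 0 := by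
    simpa [hbr] using (br_L00_apply a 1 i).symm
  rw [hD, dmap_L, Finsupp.add_apply, br_L_apply_add,
    (mul_eq_zero.mp ha).resolve_right (by norm_cast; omega), zero_mul, zero_add,
    Finsupp.smul_apply, Finsupp.smul_apply, L_apply_of_ne (by simp), smul_zero, smul_zero]

lemma sub_smul_L00_apply_eq_zero (h : D (L 1 0) = 0) {p : ℤ × ℕ} (hp : p.1 ≠ 1) :
    (a - lam • L 0 0) p = 0 := by
  have hbr : br a (L 1 0) + lam • L 1 0 = 0 := by simpa [hD, dmap_L] using h
  obtain ⟨α, i⟩ := p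
  have := congrArg (· (α + 1, i)) hbr
  simp only [Finsupp.add_apply, br_L10_apply_add_one, Finsupp.smul_apply, Finsupp.coe_zero,
    Pi.zero_apply, smul_eq_mul] at this
  rw [Finsupp.sub_apply, Finsupp.smul_apply, smul_eq_mul]
  by_cases h0 : (α, i) = (0, 0)
  · obtain ⟨rfl, rfl⟩ := Prod.mk.inj h0
    simp [L] at this ⊢
    linear_combination -this
  · have h1 : (α + 1, i) ≠ (1, 0) := by simpa [Prod.ext_iff] using h0
    rw [L_apply_of_ne h1, mul_zero, add_zero] at this
    rw [L_apply_of_ne h0, mul_zero, sub_zero]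
    exact (mul_eq_zero.mp this).resolve_right (sub_ne_zero.mpr (by exact_mod_cast hp))

lemma apply_L_eq_of_apply_L10 (h : D (L 1 0) = 0) {β : ℤ} {j : ℕ}
    (hβ : ∀ i : ℕ, D (L β j) (1 + β, i + j) = 0) : D (L β j) = (-(j : ℂ) * lam) • L β j := by
  set r := a - lam • L 0 0 with hr
  have hone : ∀ i : ℕ, r (1, i) * coef (1, i) (β, j) = 0 := fun i => by
    have := hβ i
    rw [hD, Finsupp.add_apply, br_L_apply_add, dmap_L, Finsupp.smul_apply, Finsupp.smul_apply,
      L_apply_of_ne (by simp), smul_zero, smul_zero, add_zero] at this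
    simpa [hr, L_apply_of_ne] using this
  have hrest : br r (L β j) = 0 := br_L_eq_zero fun ⟨α, i⟩ => by
    by_cases hα : α = 1
    · subst hα; exact hone i
    · rw [sub_smul_L00_apply_eq_zero hD h hα, zero_mul]
  rw [hD, ← add_sub_cancel (lam • L 0 0) a, ← hr, map_add, LinearMap.add_apply, hrest, add_zero,
    map_smul, LinearMap.smul_apply, br_L_L, dmap_L, smul_smul, smul_smul, zero_add, zero_add,
    ← add_smul]
  congr 1
  simp only [coef]
  push_cast
  ring

end InnerPlusOuter

theorem two_local_on_basis (Δ : B → B) (hΔ : Is2Local Δ)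
    (hDer : ∀ D : B →ₗ[ℂ] B, IsDer D →
      ∃ (a : B) (lam : ℂ), ∀ x : B, D x = br a x + lam • dmap x)
    (h0 : Δ (L 0 0) = 0) (h1 : Δ (L 1 0) = 0) :
    ∀ (β : ℤ) (j : ℕ), ∃ ξ : ℂ, Δ (L β j) = ((j : ℂ) * ξ) • L β j := by
  intro β j
  obtain ⟨D, hDer₀, hD0, hDβ⟩ := hΔ (L 0 0) (L β j)
  obtain ⟨a, lam, ha⟩ := hDer D hDer₀
  obtain ⟨D', hDer₁, hD'1, hD'β⟩ := hΔ (L 1 0) (L β j)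
  obtain ⟨a', lam', ha'⟩ := hDer D' hDer₁
  have hβ : ∀ i : ℕ, D' (L β j) (1 + β, i + j) = 0 := fun i => by
    rw [← hD'β, hDβ]
    exact apply_L_one_add_eq_zero_of_apply_L00 ha (hD0 ▸ h0) β j i
  refine ⟨-lam', ?_⟩
  rw [hD'β, apply_L_eq_of_apply_L10 ha' (hD'1 ▸ h1) hβ, neg_mul, mul_neg]
end
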